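/- Let A ⊆ ℝⁿ (n ≥ 2) be orthogonally convex with finite positive Lebesgue measure, and let X be uniform on A. Then the erosion entropy satisfies h_{⊖[0,1]ⁿ}(A) ≤ (n-1)·log₂ E[‖X‖_∞] - log₂ Vₙ(A) + 4n. -/

import Mathlib

/-!
Let `V = V(A)`, `M = E ‖X‖_∞` and `δ(ε) = 1 - V(A ⊖ [0,ε]ⁿ) / V`.

If `B ⊆ [-R,R]ⁿ` is orthogonally convex, the points of `B` that leave `B` when moved by `ε eᵢ`
lie within `ε` of the end of their line section along `eᵢ`, so they have measure at most
`ε (2R)^(n-1)`. Removing them once for each coordinate leaves a set of points `x` with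
`x + {0,ε}ⁿ ⊆ A`, and orthogonal convexity fills in `x + [0,ε]ⁿ ⊆ A`. Together with
Markov's inequality `V(A \ [-R,R]ⁿ) ≤ M V / R` this gives
`δ(ε) V ≤ M V / R + n ε (2R)^(n-1)`, and the optimal `R` yields
`δ(2^(-t)) ≤ 2^((T - t)/n)` with `T = n + log₂ (n (2M)^(n-1) / V)`.
Since moreover `δ(2^(-t)) = 1` once `2^(-nt) > V`, the entropy integral is at most
`T + n / ln 2`, and `log₂ n + n / ln 2 ≤ 2n + 1` turns this into the bound.
-/

open MeasureTheory

/-- The Minkowski erosion `A ⊖ B = {x : B + x ⊆ A}`. -/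
def erosion {n : ℕ} (A B : Set (Fin n → ℝ)) : Set (Fin n → ℝ) :=
  {x | ∀ b ∈ B, b + x ∈ A}

/-- The erosion entropy `h_{⊖[0,1]ⁿ}(A) = ∫ (1{t≥0} - Vₙ(A ⊖ [0,2^{-t}]ⁿ)/Vₙ(A)) dt`. -/
noncomputable def erosionEntropy (n : ℕ) (A : Set (Fin n → ℝ)) : ℝ :=
  ∫ t : ℝ, ((if 0 ≤ t then (1 : ℝ) else 0) -
    (volume (erosion A {x : Fin n → ℝ | ∀ i, x i ∈ Set.Icc (0 : ℝ) ((2 : ℝ) ^ (-t))})).toReal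
      / (volume A).toReal)

/-- `A` is orthogonally convex if its intersection with every line parallel to a coordinate
axis is connected. -/
def OrthoConvex (n : ℕ) (A : Set (Fin n → ℝ)) : Prop :=
  ∀ (i : Fin n) (x : Fin n → ℝ), Set.OrdConnected {t : ℝ | Function.update x i t ∈ A}

open Set Real

section OrthoConvex

variable {n : ℕ} {A B : Set (Fin n → ℝ)}

theorem OrthoConvex.add_single_mem (hA : OrthoConvex n A) {x : Fin n → ℝ} {i : Fin n}
    {a b t : ℝ} (ha : x + Pi.single i a ∈ A) (hb : x + Pi.single i b ∈ A) (ht : t ∈ Icc a b) :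
    x + Pi.single i t ∈ A := by
  have hupd : ∀ s, x + Pi.single i s = Function.update x i (x i + s) := by
    intro s; ext j; rcases eq_or_ne j i with rfl | hj <;> simp [*]
  rw [hupd] at ha hb ⊢
  exact (hA i x).out ha hb ⟨by linarith [ht.1], by linarith [ht.2]⟩

theorem OrthoConvex.inter (hA : OrthoConvex n A) (hB : OrthoConvex n B) :
    OrthoConvex n (A ∩ B) :=
  fun i x => (hA i x).inter (hB i x)

theorem OrthoConvex.biInter {ι : Type*} {s : Set ι} {A : ι → Set (Fin n → ℝ)}
    (hA : ∀ k ∈ s, OrthoConvex n (A k)) : OrthoConvex n (⋂ k ∈ s, A k) := by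
  intro i x
  simp only [mem_iInter, ofPred_forall]
  exact ordConnected_iInter fun k => ordConnected_iInter fun hk => hA k hk i x

theorem OrthoConvex.preimage_add_left (hA : OrthoConvex n A) (b : Fin n → ℝ) :
    OrthoConvex n ((b + ·) ⁻¹' A) := by
  intro i x
  have hupd : ∀ t, b + Function.update x i t = Function.update (b + x) i (b i + t) := by
    intro t; ext j; rcases eq_or_ne j i with rfl | hj <;> simp [*]
  refine ⟨fun t₁ h₁ t₂ h₂ t ht => ?_⟩
  simp only [mem_ofPred_eq, mem_preimage, hupd] at h₁ h₂ ⊢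
  exact (hA i (b + x)).out h₁ h₂ ⟨by linarith [ht.1], by linarith [ht.2]⟩

theorem Convex.orthoConvex (hA : Convex ℝ A) : OrthoConvex n A := by
  intro i x
  refine Convex.ordConnected fun t₁ h₁ t₂ h₂ a b ha hb hab => ?_
  have hcomb : Function.update x i (a • t₁ + b • t₂) =
      a • Function.update x i t₁ + b • Function.update x i t₂ := by
    ext j
    rcases eq_or_ne j i with rfl | hj
    · simp
    · simp [hj, ← add_mul, hab]
  simpa only [mem_ofPred_eq, hcomb] using hA h₁ h₂ ha hb hab

theorem OrthoConvex.Icc_subset_of_vertices_subset (hB : OrthoConvex n B) {a b : Fin n → ℝ}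
    (h : univ.pi (fun j => ({a j, b j} : Set ℝ)) ⊆ B) : Icc a b ⊆ B := by
  classical
  suffices H : ∀ s : Finset (Fin n),
      univ.pi (fun j => if j ∈ s then Icc (a j) (b j) else {a j, b j}) ⊆ B by
    simpa [← pi_univ_Icc] using H Finset.univ
  intro s
  induction s using Finset.induction_on with
  | empty => simpa using h
  | insert i s hi ih =>
    intro y hy
    have hyi : y i ∈ Icc (a i) (b i) := by simpa using hy i trivial
    have hupd : ∀ c ∈ ({a i, b i} : Set ℝ), Function.update y i c ∈ B := by
      intro c hc
      refine ih fun j _ => ?_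
      rcases eq_or_ne j i with rfl | hj
      · simpa [hi] using hc
      · simpa [Function.update_of_ne hj, hj] using hy j trivial
    simpa using (hB i y).out (hupd _ (by simp)) (hupd _ (by simp)) hyi

end OrthoConvex

section Erosion

variable {n : ℕ} {A A' B B' : Set (Fin n → ℝ)}

theorem erosion_eq_biInter (A B : Set (Fin n → ℝ)) : erosion A B = ⋂ b ∈ B, (b + ·) ⁻¹' A := by
  ext x
  simp [erosion]

theorem erosion_mono (hA : A ⊆ A') (hB : B' ⊆ B) : erosion A B ⊆ erosion A' B' :=
  fun _ hx b hb => hA (hx b (hB hb))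

theorem erosion_subset (h : (0 : Fin n → ℝ) ∈ B) : erosion A B ⊆ A :=
  fun x hx => by simpa using hx 0 h

theorem orthoConvex_erosion (hA : OrthoConvex n A) (B : Set (Fin n → ℝ)) :
    OrthoConvex n (erosion A B) := by
  rw [erosion_eq_biInter]
  exact OrthoConvex.biInter fun b _ => hA.preimage_add_left b

theorem MeasurableSet.erosion_of_finite (hA : MeasurableSet A) (hB : B.Finite) :
    MeasurableSet (erosion A B) := by
  rw [erosion_eq_biInter]
  exact hB.measurableSet_biInter fun b _ => hA.preimage (measurable_const_add b)

end Erosion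

def cube (n : ℕ) (ε : ℝ) : Set (Fin n → ℝ) := {x | ∀ i, x i ∈ Icc 0 ε}

-- Eroding by these finitely many vertices keeps sets measurable; eroding by a cube need not.
def cubeVertices {n : ℕ} (ε : ℝ) (s : Finset (Fin n)) : Set (Fin n → ℝ) :=
  univ.pi fun j => if j ∈ s then {0, ε} else {0}

section CubeVertices

variable {n : ℕ} {A : Set (Fin n → ℝ)} {ε : ℝ}

theorem cube_eq_Icc (n : ℕ) (ε : ℝ) : cube n ε = Icc 0 fun _ => ε := by
  ext x
  simp [cube, Pi.le_def, forall_and]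

theorem cube_mono {ε ε' : ℝ} (h : ε ≤ ε') : cube n ε ⊆ cube n ε' :=
  fun _ hx i => ⟨(hx i).1, (hx i).2.trans h⟩

theorem zero_mem_cube (hε : 0 ≤ ε) : (0 : Fin n → ℝ) ∈ cube n ε :=
  fun _ => ⟨le_rfl, hε⟩

theorem cubeVertices_finite (ε : ℝ) (s : Finset (Fin n)) : (cubeVertices ε s).Finite :=
  Finite.pi fun j => by split_ifs <;> simp

theorem zero_mem_cubeVertices (ε : ℝ) (s : Finset (Fin n)) :
    (0 : Fin n → ℝ) ∈ cubeVertices ε s :=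
  fun j _ => by dsimp only; split_ifs <;> simp

theorem erosion_cubeVertices_empty (A : Set (Fin n → ℝ)) (ε : ℝ) :
    erosion A (cubeVertices ε ∅) = A := by
  have : cubeVertices ε (∅ : Finset (Fin n)) = {0} := by
    ext x
    simp [cubeVertices, funext_iff]
  simp [this, erosion]

theorem erosion_cubeVertices_insert (A : Set (Fin n → ℝ)) (ε : ℝ) {i : Fin n}
    {s : Finset (Fin n)} (hi : i ∉ s) :
    erosion A (cubeVertices ε s) ∩ {x | x + Pi.single i ε ∈ erosion A (cubeVertices ε s)} ⊆
      erosion A (cubeVertices ε (insert i s)) := by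
  rintro x ⟨hx, hxi⟩ b hb
  have hb' : Function.update b i 0 ∈ cubeVertices ε s := by
    intro j _
    rcases eq_or_ne j i with rfl | hj
    · simp [hi]
    · simpa [hj] using hb j trivial
  rcases (by simpa [hi] using hb i trivial : b i = 0 ∨ b i = ε) with h0 | hε
  · simpa [← h0] using hx _ hb'
  · convert hxi _ hb' using 1
    ext j
    rcases eq_or_ne j i with rfl | hj
    · simp [hε, add_comm]
    · simp [hj]

theorem OrthoConvex.erosion_cubeVertices_univ_subset (hA : OrthoConvex n A) :
    erosion A (cubeVertices ε Finset.univ) ⊆ erosion A (cube n ε) := by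
  intro x hx
  have hIcc := (hA.preimage_add_left x).Icc_subset_of_vertices_subset (a := 0) (b := fun _ => ε)
    fun b hb => by simpa [add_comm] using hx b (by simpa [cubeVertices] using hb)
  intro b hb
  simpa [add_comm] using hIcc (by rwa [← cube_eq_Icc])

end CubeVertices

theorem le_of_forall_nat_mul_le_add {v a b : ℝ} (h : ∀ K : ℕ, K * v ≤ a + K * b) : v ≤ b := by
  by_contra! hbv
  obtain ⟨K, hK⟩ := exists_nat_gt (a / (v - b))
  rw [div_lt_iff₀ (by linarith)] at hK
  linarith [h K]

section ShiftLoss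

variable {n : ℕ} {B : Set (Fin n → ℝ)} {R ε : ℝ}

-- A point of `B \ (B - ε eᵢ)` is within `ε` of the end of its line section along `eᵢ`.
theorem OrthoConvex.pairwise_disjoint_shifts (hB : OrthoConvex n B) (hε : 0 ≤ ε) (i : Fin n) :
    Pairwise (Function.onFun Disjoint fun m : ℕ =>
      (fun x : Fin n → ℝ => x + Pi.single i (-(m * ε) : ℝ)) ⁻¹'
        (B \ {x | x + Pi.single i ε ∈ B})) := by
  have hgap : ∀ x ∈ B \ {x | x + Pi.single i ε ∈ B}, ∀ c : ℝ, 1 ≤ c →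
      x + Pi.single i (c * ε) ∉ B := by
    rintro x ⟨hx, hxε⟩ c hc hxc
    exact hxε (hB.add_single_mem (a := 0) (by simpa using hx) hxc ⟨hε, by nlinarith⟩)
  intro a b hab
  wlog hlt : a < b generalizing a b
  · exact (this hab.symm (lt_of_le_of_ne (not_lt.mp hlt) hab.symm)).symm
  refine disjoint_left.mpr fun z hza hzb => hgap _ hzb (b - a) ?_ ?_
  · have : (a : ℝ) + 1 ≤ b := by exact_mod_cast hlt
    linarith
  · convert hza.1 using 1
    ext j
    rcases eq_or_ne j i with rfl | hj
    · simp only [Pi.add_apply, Pi.single_eq_same]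
      ring
    · simp [hj]

theorem shift_preimage_closedBall_subset {i : Fin n} {m K : ℕ} (hmK : m < K) (hε : 0 ≤ ε) :
    (fun x : Fin n → ℝ => x + Pi.single i (-(m * ε) : ℝ)) ⁻¹' Metric.closedBall 0 R ⊆
      Icc (fun _ => -R) (Function.update (fun _ => R) i (R + K * ε)) := by
  intro z hz
  have hcoord (j : Fin n) : |z j + (Pi.single i (-(m * ε) : ℝ) : Fin n → ℝ) j| ≤ R := by
    simpa using (norm_le_pi_norm _ j).trans (mem_closedBall_zero_iff.mp hz)
  have hzi : |z i - m * ε| ≤ R := by simpa [sub_eq_add_neg] using hcoord i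
  have hzj (j : Fin n) (hj : j ≠ i) : |z j| ≤ R := by simpa [hj] using hcoord j
  have hmK : (m : ℝ) * ε ≤ K * ε := mul_le_mul_of_nonneg_right (by exact_mod_cast hmK.le) hε
  have hm0 : 0 ≤ (m : ℝ) * ε := by positivity
  refine ⟨fun j => ?_, fun j => ?_⟩ <;> rcases eq_or_ne j i with rfl | hj
  · linarith [(abs_le.mp hzi).1]
  · exact (abs_le.mp (hzj j hj)).1
  · rw [Function.update_self]
    linarith [(abs_le.mp hzi).2]
  · rw [Function.update_of_ne hj]
    exact (abs_le.mp (hzj j hj)).2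

theorem volume_real_Icc_update (hR : 0 ≤ R) (hε : 0 ≤ ε) (i : Fin n) (K : ℕ) :
    volume.real (Icc (fun _ => -R) (Function.update (fun _ => R) i (R + K * ε))) =
      (2 * R + K * ε) * (2 * R) ^ (n - 1) := by
  have hle : (fun _ => -R) ≤ Function.update (fun _ : Fin n => R) i (R + K * ε) := by
    intro j
    rcases eq_or_ne j i with rfl | hj
    · have : 0 ≤ (K : ℝ) * ε := by positivity
      simp only [Function.update_self]
      linarith
    · simp only [Function.update_of_ne hj]
      linarith
  rw [measureReal_def, Real.volume_Icc_pi_toReal hle,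
    ← Finset.mul_prod_erase _ _ (Finset.mem_univ i),
    Finset.prod_congr rfl fun j hj => by rw [Function.update_of_ne (Finset.ne_of_mem_erase hj)],
    Finset.prod_const, Finset.card_erase_of_mem (Finset.mem_univ i), Finset.card_univ,
    Fintype.card_fin, Function.update_self]
  ring

-- `K` disjoint translates of the set fit in a box of volume `(2R + Kε)(2R)^(n-1)`; let `K → ∞`.
theorem OrthoConvex.volume_diff_shift_le (hB : OrthoConvex n B) (hBm : MeasurableSet B)
    (hR : 0 ≤ R) (hε : 0 ≤ ε) (hBR : B ⊆ Metric.closedBall 0 R) (i : Fin n) :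
    volume (B \ {x | x + Pi.single i ε ∈ B}) ≤ ENNReal.ofReal (ε * (2 * R) ^ (n - 1)) := by
  set D := B \ {x | x + Pi.single i ε ∈ B}
  have hDm : MeasurableSet D := hBm.diff (hBm.preimage (measurable_add_const _))
  have hDfin : volume D ≠ ⊤ :=
    ((measure_mono (sdiff_subset.trans hBR)).trans_lt measure_closedBall_lt_top).ne
  have hdisj := hB.pairwise_disjoint_shifts hε i
  have hcount (K : ℕ) :
      K * volume.real D ≤ 2 * R * (2 * R) ^ (n - 1) + K * (ε * (2 * R) ^ (n - 1)) := by
    have hbox : (K : ENNReal) * volume D ≤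
        volume (Icc (fun _ => -R) (Function.update (fun _ => R) i (R + K * ε))) := by
      calc (K : ENNReal) * volume D
          = ∑ m ∈ Finset.range K,
              volume ((fun x : Fin n → ℝ => x + Pi.single i (-(m * ε) : ℝ)) ⁻¹' D) := by
            simp only [measure_preimage_add_right, Finset.sum_const, Finset.card_range,
              nsmul_eq_mul]
        _ = volume (⋃ m ∈ Finset.range K,
              (fun x : Fin n → ℝ => x + Pi.single i (-(m * ε) : ℝ)) ⁻¹' D) :=
            by rw [measure_biUnion_finset (fun a _ b _ hab => hdisj hab)
                fun m _ => hDm.preimage (measurable_add_const _)]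
        _ ≤ _ := measure_mono <| iUnion₂_subset fun m hm =>
            (preimage_mono (sdiff_subset.trans hBR)).trans
              (shift_preimage_closedBall_subset (Finset.mem_range.mp hm) hε)
    have := ENNReal.toReal_mono measure_Icc_lt_top.ne hbox
    rw [ENNReal.toReal_mul, ENNReal.toReal_natCast, ← measureReal_def, ← measureReal_def,
      volume_real_Icc_update hR hε] at this
    linarith
  rw [← ENNReal.ofReal_toReal hDfin]
  exact ENNReal.ofReal_le_ofReal (le_of_forall_nat_mul_le_add hcount)

end ShiftLoss

section ErosionVolume

variable {n : ℕ} {A : Set (Fin n → ℝ)} {R ε : ℝ}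

theorem OrthoConvex.volume_le_volume_erosion_cubeVertices_add (hA : OrthoConvex n A)
    (hAm : MeasurableSet A) (hR : 0 ≤ R) (hε : 0 ≤ ε) (hAR : A ⊆ Metric.closedBall 0 R)
    (s : Finset (Fin n)) :
    volume A ≤ volume (erosion A (cubeVertices ε s)) +
      s.card * ENNReal.ofReal (ε * (2 * R) ^ (n - 1)) := by
  induction s using Finset.induction_on with
  | empty => simp [erosion_cubeVertices_empty]
  | insert i s hi ih =>
    set E := erosion A (cubeVertices ε s)
    set δ := ENNReal.ofReal (ε * (2 * R) ^ (n - 1))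
    have hE : OrthoConvex n E := orthoConvex_erosion hA _
    have hEm : MeasurableSet E := hAm.erosion_of_finite (cubeVertices_finite ε s)
    have hER : E ⊆ Metric.closedBall 0 R :=
      (erosion_subset (zero_mem_cubeVertices ε s)).trans hAR
    calc volume A ≤ volume E + s.card * δ := ih
      _ ≤ volume (E ∩ {x | x + Pi.single i ε ∈ E}) + volume (E \ {x | x + Pi.single i ε ∈ E}) +
          s.card * δ := by gcongr; exact measure_le_inter_add_sdiff _ _ _
      _ ≤ volume (erosion A (cubeVertices ε (insert i s))) + δ + s.card * δ := by
          gcongr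
          · exact erosion_cubeVertices_insert A ε hi
          · exact hE.volume_diff_shift_le hEm hR hε hER i
      _ = volume (erosion A (cubeVertices ε (insert i s))) + (insert i s).card * δ := by
          rw [Finset.card_insert_of_notMem hi]
          push_cast
          ring

theorem OrthoConvex.volume_le_volume_erosion_cube_add (hA : OrthoConvex n A)
    (hAm : MeasurableSet A) (hR : 0 ≤ R) (hε : 0 ≤ ε) :
    volume A ≤ volume (erosion A (cube n ε)) + volume (A \ Metric.closedBall 0 R) +
      n * ENNReal.ofReal (ε * (2 * R) ^ (n - 1)) := by
  set A' := A ∩ Metric.closedBall 0 R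
  have hA' : OrthoConvex n A' := hA.inter (convex_closedBall 0 R).orthoConvex
  have hcore := hA'.volume_le_volume_erosion_cubeVertices_add
    (hAm.inter measurableSet_closedBall) hR hε inter_subset_right Finset.univ
  rw [Finset.card_univ, Fintype.card_fin] at hcore
  have hsub : erosion A' (cubeVertices ε Finset.univ) ⊆ erosion A (cube n ε) :=
    hA'.erosion_cubeVertices_univ_subset.trans (erosion_mono inter_subset_left subset_rfl)
  calc volume A ≤ volume A' + volume (A \ Metric.closedBall 0 R) :=
        measure_le_inter_add_sdiff _ _ _
    _ ≤ volume (erosion A (cube n ε)) + n * ENNReal.ofReal (ε * (2 * R) ^ (n - 1)) +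
        volume (A \ Metric.closedBall 0 R) := by
      gcongr
      exact hcore.trans (by gcongr)
    _ = _ := by ring

end ErosionVolume

section NormIntegral

variable {E : Type*} [NormedAddCommGroup E] [MeasurableSpace E] {μ : Measure E} {A : Set E}

theorem measureReal_sdiff_closedBall_le (hfin : μ A ≠ ⊤) (hInt : IntegrableOn (‖·‖) A μ)
    {R : ℝ} (hR : 0 < R) : μ.real (A \ Metric.closedBall 0 R) ≤ (∫ x in A, ‖x‖ ∂μ) / R := by
  have : IsFiniteMeasure (μ.restrict A) := isFiniteMeasure_restrict.mpr hfin
  have hsub : A \ Metric.closedBall 0 R ⊆ {x | R ≤ ‖x‖} ∩ A := fun x hx =>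
    ⟨(not_le.mp (mt mem_closedBall_zero_iff.mpr hx.2)).le, hx.1⟩
  rw [le_div_iff₀ hR, mul_comm]
  calc R * μ.real (A \ Metric.closedBall 0 R) ≤ R * (μ.restrict A).real {x | R ≤ ‖x‖} := by
        gcongr
        rw [measureReal_def, measureReal_def]
        exact ENNReal.toReal_mono (measure_ne_top _ _)
          ((measure_mono hsub).trans (Measure.le_restrict_apply _ _))
    _ ≤ ∫ x in A, ‖x‖ ∂μ :=
        mul_meas_ge_le_integral_of_nonneg (ae_of_all _ fun x => norm_nonneg x) hInt R

theorem setIntegral_norm_pos [MeasurableSingletonClass E] [NullSingletonClass μ]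
    (hA : 0 < μ A) (hInt : IntegrableOn (‖·‖) A μ) : 0 < ∫ x in A, ‖x‖ ∂μ := by
  rw [integral_pos_iff_support_of_nonneg (fun x => norm_nonneg x) hInt]
  have hsupp : Function.support (fun x : E => ‖x‖) = {0}ᶜ := by
    ext
    simp
  rwa [hsupp, Measure.restrict_apply (measurableSet_singleton 0).compl, inter_comm,
    ← sdiff_eq, measure_sdiff_null (measure_singleton 0)]

end NormIntegral

noncomputable def erosionRatio {n : ℕ} (A : Set (Fin n → ℝ)) (ε : ℝ) : ℝ :=
  volume.real (erosion A (cube n ε)) / volume.real A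

noncomputable def meanNorm {n : ℕ} (A : Set (Fin n → ℝ)) : ℝ :=
  (∫ x in A, ‖x‖) / volume.real A

section ErosionRatio

variable {n : ℕ} {A : Set (Fin n → ℝ)} {ε ε' : ℝ}

theorem erosionRatio_nonneg : 0 ≤ erosionRatio A ε := by
  unfold erosionRatio
  positivity

theorem erosionRatio_le_one (hfin : volume A ≠ ⊤) (hε : 0 ≤ ε) : erosionRatio A ε ≤ 1 :=
  div_le_one_of_le₀ (measureReal_mono (erosion_subset (zero_mem_cube hε)) hfin) measureReal_nonneg

theorem erosionRatio_anti (hfin : volume A ≠ ⊤) (hε : 0 ≤ ε) (h : ε ≤ ε') :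
    erosionRatio A ε' ≤ erosionRatio A ε :=
  div_le_div_of_nonneg_right (measureReal_mono (erosion_mono subset_rfl (cube_mono h))
    (ne_top_of_le_ne_top hfin (measure_mono (erosion_subset (zero_mem_cube hε)))))
    measureReal_nonneg

theorem erosionRatio_eq_zero (h : volume A < ENNReal.ofReal ε ^ n) : erosionRatio A ε = 0 := by
  suffices erosion A (cube n ε) = ∅ by simp [erosionRatio, this]
  refine eq_empty_of_forall_notMem fun x hx => h.not_ge ?_
  have hIcc : Icc x (x + fun _ => ε) ⊆ A := fun y hy => by
    simpa using hx (y - x) fun i =>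
      ⟨sub_nonneg.mpr (hy.1 i), sub_le_iff_le_add'.mpr (hy.2 i)⟩
  calc ENNReal.ofReal ε ^ n = volume (Icc x (x + fun _ => ε)) := by simp [Real.volume_Icc_pi]
    _ ≤ volume A := measure_mono hIcc

theorem OrthoConvex.measureReal_le_measureReal_erosion_add (hA : OrthoConvex n A)
    (hAm : MeasurableSet A) (hfin : volume A ≠ ⊤) (hInt : IntegrableOn (‖·‖) A) (hε : 0 ≤ ε) {R : ℝ} (hR : 0 < R) :
    volume.real A ≤ volume.real (erosion A (cube n ε)) + (∫ x in A, ‖x‖) / R +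
      n * (ε * (2 * R) ^ (n - 1)) := by
  have hE : volume (erosion A (cube n ε)) ≠ ⊤ :=
    ne_top_of_le_ne_top hfin (measure_mono (erosion_subset (zero_mem_cube hε)))
  have hD : volume (A \ Metric.closedBall 0 R) ≠ ⊤ :=
    ne_top_of_le_ne_top hfin (measure_mono sdiff_subset)
  have h := ENNReal.toReal_mono (by finiteness)
    (hA.volume_le_volume_erosion_cube_add hAm hR.le hε)
  rw [ENNReal.toReal_add (by finiteness) (by finiteness), ENNReal.toReal_add hE hD,
    ENNReal.toReal_mul, ENNReal.toReal_natCast, ENNReal.toReal_ofReal (by positivity)] at h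
  simp only [← measureReal_def] at h
  linarith [measureReal_sdiff_closedBall_le hfin hInt hR]

theorem meanNorm_pos (hn : 0 < n) (h0 : 0 < volume A) (hfin : volume A ≠ ⊤)
    (hInt : IntegrableOn (‖·‖) A) : 0 < meanNorm A :=
  have : Nonempty (Fin n) := ⟨⟨0, hn⟩⟩
  div_pos (setIntegral_norm_pos h0 hInt) (ENNReal.toReal_pos h0.ne' hfin)

-- `R = M / θ` makes the Markov term and the boundary term both equal to `V θ`.
theorem OrthoConvex.one_sub_erosionRatio_le (hn : 0 < n) (hA : OrthoConvex n A)
    (hAm : MeasurableSet A) (h0 : 0 < volume A) (hfin : volume A ≠ ⊤)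
    (hInt : IntegrableOn (‖·‖) A) (hε : 0 < ε) :
    1 - erosionRatio A ε ≤
      2 * (n * (2 * meanNorm A) ^ (n - 1) / volume.real A * ε) ^ (1 / n : ℝ) := by
  obtain ⟨m, rfl⟩ := Nat.exists_eq_add_one_of_ne_zero hn.ne'
  have : Nonempty (Fin (m + 1)) := ⟨0⟩
  have h := fun R (hR : 0 < R) => hA.measureReal_le_measureReal_erosion_add hAm hfin hInt hε.le hR
  simp only [Nat.add_sub_cancel] at h ⊢
  set V := volume.real A
  set I := ∫ x in A, ‖x‖
  set M := meanNorm A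
  have hV : 0 < V := ENNReal.toReal_pos h0.ne' hfin
  have hI : 0 < I := setIntegral_norm_pos h0 hInt
  have hM : 0 < M := meanNorm_pos hn h0 hfin hInt
  set θ := ((m + 1 : ℕ) * (2 * M) ^ m / V * ε) ^ (1 / (m + 1 : ℕ) : ℝ)
  have hθ : 0 < θ := by positivity
  have hθm : θ ^ (m + 1) = (m + 1 : ℕ) * (2 * M) ^ m / V * ε := by
    rw [← Real.rpow_natCast, ← Real.rpow_mul (by positivity), one_div,
      inv_mul_cancel₀ (by positivity), Real.rpow_one]
  have hmarkov : I / (M / θ) = V * θ := by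
    rw [show M = I / V from rfl]
    field_simp
  have hshift : ((m + 1 : ℕ) : ℝ) * (ε * (2 * (M / θ)) ^ m) = V * θ := by
    calc ((m + 1 : ℕ) : ℝ) * (ε * (2 * (M / θ)) ^ m)
        = ((m + 1 : ℕ) * (2 * M) ^ m / V * ε) * V / θ ^ m := by
          rw [mul_div_assoc', div_pow]
          field_simp
      _ = V * θ := by
          rw [← hθm, pow_succ]
          field_simp
  have := h (M / θ) (by positivity)
  rw [erosionRatio, one_sub_div hV.ne', div_le_iff₀ hV]
  linarith

end ErosionRatio

theorem integrable_and_integral_indicator_Ici_sub_indicator_Ici (a b : ℝ) :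
    Integrable ((Ici a).indicator 1 - (Ici b).indicator 1 : ℝ → ℝ) ∧
      ∫ t, ((Ici a).indicator 1 - (Ici b).indicator 1 : ℝ → ℝ) t = b - a := by
  wlog hab : a ≤ b generalizing a b
  · obtain ⟨hint, hval⟩ := this b a (le_of_not_ge hab)
    refine ⟨by simpa using hint.neg, ?_⟩
    rw [← neg_sub a b, ← hval, ← integral_neg]
    simp
  rw [← indicator_sdiff (Ici_subset_Ici.mpr hab), Ici_sdiff_Ici]
  refine ⟨(integrable_indicator_iff measurableSet_Ico).mpr
    (integrableOn_const measure_Ico_lt_top.ne), ?_⟩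
  rw [integral_indicator_one measurableSet_Ico, Real.volume_real_Ico_of_le hab]

-- The integrand is dominated by `1{t ≥ 0} - max 0 (1 - exp (b (T - t)))`.
theorem integral_heaviside_sub_le {r : ℝ → ℝ} (hr : Measurable r) (hr0 : ∀ t, 0 ≤ r t)
    (hr1 : ∀ t, r t ≤ 1) {t₀ : ℝ} (hrt₀ : ∀ t < t₀, r t = 0) {b T : ℝ} (hb : 0 < b)
    (hrT : ∀ t, 1 - exp (b * (T - t)) ≤ r t) :
    ∫ t, ((if 0 ≤ t then (1 : ℝ) else 0) - r t) ≤ T + b⁻¹ := by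
  set φ : ℝ → ℝ := (Ici T).indicator fun t => exp (b * T) * exp (-b * t)
  have hφ_apply : ∀ t, T ≤ t → φ t = exp (b * (T - t)) := fun t ht => by
    simp only [φ, indicator_of_mem (mem_Ici.mpr ht), ← exp_add]
    ring_nf
  have hφ0 : ∀ t, 0 ≤ φ t := fun t => indicator_nonneg (fun _ _ => by positivity) t
  have hφ : Integrable φ ∧ ∫ t, φ t = b⁻¹ := by
    refine ⟨(integrable_indicator_iff measurableSet_Ici).mpr
      ((integrableOn_Ici_iff_integrableOn_Ioi).mpr
        ((integrableOn_exp_mul_Ioi (by linarith) T).const_mul _)), ?_⟩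
    rw [integral_indicator measurableSet_Ici, integral_Ici_eq_integral_Ioi, integral_const_mul,
      integral_exp_mul_Ioi (by linarith), neg_div_neg_eq, mul_div_assoc', ← exp_add]
    simp [div_eq_inv_mul]
  obtain ⟨hstep, hstep_val⟩ := integrable_and_integral_indicator_Ici_sub_indicator_Ici 0 T
  have hle (t : ℝ) : (if 0 ≤ t then (1 : ℝ) else 0) - r t ≤
      ((Ici 0).indicator 1 - (Ici T).indicator 1 : ℝ → ℝ) t + φ t := by
    simp only [Pi.sub_apply, indicator_apply, mem_Ici, Pi.one_apply]
    by_cases hT : T ≤ t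
    · rw [hφ_apply t hT, if_pos hT]
      linarith [hrT t]
    · rw [if_neg hT]
      linarith [hr0 t, hφ0 t]
  have hint : Integrable fun t => (if 0 ≤ t then (1 : ℝ) else 0) - r t := by
    refine Integrable.mono' (((integrable_indicator_iff measurableSet_Ico).mpr
      (integrableOn_const (s := Ico (min t₀ 0) (max T 0)) measure_Ico_lt_top.ne
        (C := (1 : ℝ)))).add hφ.1)
      ((Measurable.ite measurableSet_Ici measurable_const measurable_const).sub
        hr).aestronglyMeasurable
      (ae_of_all _ fun t => ?_)
    rcases lt_or_ge t (min t₀ 0) with h₁ | h₁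
    · rw [hrt₀ t (h₁.trans_le (min_le_left _ _)),
        if_neg (not_le.mpr (h₁.trans_le (min_le_right _ _)))]
      simpa using add_nonneg (indicator_nonneg (fun _ _ => zero_le_one) t) (hφ0 t)
    rcases lt_or_ge t (max T 0) with h₂ | h₂
    · rw [Pi.add_apply, indicator_of_mem (mem_Ico.mpr ⟨h₁, h₂⟩), Real.norm_eq_abs, abs_le]
      split_ifs <;> constructor <;> linarith [hr0 t, hr1 t, hφ0 t]
    · rw [Pi.add_apply, indicator_of_notMem (fun h => (not_lt.mpr h₂) h.2), zero_add,
        hφ_apply t (le_of_max_le_left h₂), if_pos (le_of_max_le_right h₂), Real.norm_eq_abs,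
        abs_of_nonneg (by linarith [hr1 t])]
      linarith [hrT t]
  calc ∫ t, ((if 0 ≤ t then (1 : ℝ) else 0) - r t)
      ≤ ∫ t, (((Ici 0).indicator 1 - (Ici T).indicator 1 : ℝ → ℝ) t + φ t) :=
        integral_mono hint (hstep.add hφ.1) hle
    _ = T + b⁻¹ := by rw [integral_add hstep hφ.1, hstep_val, hφ.2, sub_zero]

theorem logb_two_add_div_log_two_le {x : ℝ} (hx : 0 < x) : logb 2 x + x / log 2 ≤ 2 * x + 1 := by
  have hlog2 := Real.log_two_gt_d9
  have hu : 0 < √x := Real.sqrt_pos.mpr hx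
  have hux : √x ^ 2 = x := Real.sq_sqrt hx.le
  have hlog : log x ≤ 2 * (√x - 1) := by
    linarith [Real.log_le_sub_one_of_pos hu, Real.log_sqrt hx.le]
  rw [logb, ← add_div, div_le_iff₀ (by positivity)]
  nlinarith [sq_nonneg (√x - 2.59), mul_nonneg (sub_nonneg.mpr hlog2.le) (sq_nonneg √x)]

theorem two_mul_rpow_eq_exp {K : ℝ} (hK : 0 < K) {n : ℝ} (hn : n ≠ 0) (t : ℝ) :
    2 * (K * 2 ^ (-t)) ^ (1 / n) = exp (log 2 / n * (n + logb 2 K - t)) := by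
  calc 2 * (K * 2 ^ (-t)) ^ (1 / n) = exp (log 2) * exp (log (K * 2 ^ (-t)) * (1 / n)) := by
        rw [exp_log two_pos, ← rpow_def_of_pos (by positivity)]
    _ = exp (log 2 / n * (n + logb 2 K - t)) := by
        rw [← exp_add, log_mul hK.ne' (by positivity), log_rpow two_pos, logb]
        congr 1
        field_simp
        ring

section ErosionEntropy

variable {n : ℕ} {A : Set (Fin n → ℝ)}

theorem OrthoConvex.erosionEntropy_le (hn : 0 < n) (hA : OrthoConvex n A)
    (hAm : MeasurableSet A) (h0 : 0 < volume A) (hfin : volume A ≠ ⊤)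
    (hInt : IntegrableOn (‖·‖) A) :
    erosionEntropy n A ≤
      n + logb 2 (n * (2 * meanNorm A) ^ (n - 1) / volume.real A) + n / log 2 := by
  set V := volume.real A
  have hV : 0 < V := ENNReal.toReal_pos h0.ne' hfin
  have hM : 0 < meanNorm A := meanNorm_pos hn h0 hfin hInt
  have hmono : Monotone fun t : ℝ => erosionRatio A (2 ^ (-t)) := fun t t' htt' =>
    erosionRatio_anti hfin (by positivity)
      (rpow_le_rpow_of_exponent_le one_le_two (neg_le_neg htt'))
  have hvanish (t : ℝ) (ht : t < -logb 2 V / n) : erosionRatio A (2 ^ (-t)) = 0 := by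
    refine erosionRatio_eq_zero ?_
    rw [← ENNReal.ofReal_toReal hfin, ← ENNReal.ofReal_pow (by positivity),
      ENNReal.ofReal_lt_ofReal_iff (by positivity), ← rpow_natCast, ← rpow_mul zero_le_two]
    change V < _
    rw [← logb_lt_iff_lt_rpow one_lt_two hV]
    rwa [lt_div_iff₀ (by positivity), lt_neg, ← neg_mul] at ht
  have hlower (t : ℝ) :
      1 - exp (log 2 / n * (n + logb 2 (n * (2 * meanNorm A) ^ (n - 1) / V) - t)) ≤
        erosionRatio A (2 ^ (-t)) := by
    rw [← two_mul_rpow_eq_exp (by positivity) (by positivity)]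
    linarith [hA.one_sub_erosionRatio_le hn hAm h0 hfin hInt (ε := 2 ^ (-t)) (by positivity)]
  calc erosionEntropy n A
      = ∫ t, ((if 0 ≤ t then (1 : ℝ) else 0) - erosionRatio A (2 ^ (-t))) := rfl
    _ ≤ _ := integral_heaviside_sub_le hmono.measurable (fun _ => erosionRatio_nonneg)
        (fun _ => erosionRatio_le_one hfin (by positivity)) hvanish (by positivity) hlower
    _ = _ := by rw [inv_div]

end ErosionEntropy

/-- For `A ⊆ ℝⁿ` (`n ≥ 2`) orthogonally convex of finite positive measure, with `X` uniform
on `A`: `h_{⊖[0,1]ⁿ}(A) ≤ (n-1) log₂ E[‖X‖_∞] - log₂ Vₙ(A) + 4n`. -/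
theorem stmt_18 (n : ℕ) (hn : 2 ≤ n) (A : Set (Fin n → ℝ)) (hA : MeasurableSet A)
    (hoc : OrthoConvex n A) (h0 : 0 < volume A) (hfin : volume A ≠ ⊤)
    (hInt : IntegrableOn (fun x => ‖x‖) A volume) :
    erosionEntropy n A ≤
      ((n : ℝ) - 1) * Real.logb 2 ((∫ x in A, ‖x‖ ∂volume) / (volume A).toReal)
        - Real.logb 2 (volume A).toReal + 4 * n := by
  have hn0 : 0 < n := by omega
  have hV : 0 < volume.real A := ENNReal.toReal_pos h0.ne' hfin
  have hM : 0 < meanNorm A := meanNorm_pos hn0 h0 hfin hInt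
  have hlogb : logb 2 (n * (2 * meanNorm A) ^ (n - 1) / volume.real A) =
      logb 2 n + (n - 1) * (1 + logb 2 (meanNorm A)) - logb 2 (volume.real A) := by
    rw [logb_div (by positivity) hV.ne', logb_mul (by positivity) (by positivity), logb_pow,
      logb_mul two_ne_zero hM.ne', logb_self_eq_one one_lt_two, Nat.cast_pred hn0]
  have hentropy := hoc.erosionEntropy_le hn0 hA h0 hfin hInt
  have hnum := logb_two_add_div_log_two_le (x := n) (by positivity)
  change erosionEntropy n A ≤ (n - 1) * logb 2 (meanNorm A) - logb 2 (volume.real A) + 4 * n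
  linarith
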